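/- arXiv:2110.03424 — 4 statements merged into one kernel-verified Lean document; each statement's English description precedes it below -/
import Mathlib

section
/- In the subset-sum MDP construction, for every deterministic policy π, the start-state value satisfies N · V^π(s₀) = Σ_{i : π(s_i)=a₁} u_i, i.e., N times the value of π at s₀ equals the sum of the subset of U selected by the states where π takes action a₁. -/
/-- In the subset-sum MDP (states s₀, s₁,…,s_N, s_T; action `true` = a₁ at sᵢ gives
reward uᵢ, `false` = a₂ gives 0; V^π(s₀) = (1/N) Σᵢ R(sᵢ,π(sᵢ))), for every deterministic
policy π, `N · V^π(s₀) = Σ_{i : π(sᵢ)=a₁} uᵢ`. -/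
theorem subset_sum_mdp_value (N : ℕ) (hN : 0 < N) (u : Fin N → ℕ)
    (π : (Unit ⊕ Fin N ⊕ Unit) → Bool) :
    (N : ℝ) *
        ((1 / (N : ℝ)) *
          ∑ i : Fin N, if π (Sum.inr (Sum.inl i)) then (u i : ℝ) else 0) =
      ∑ i ∈ Finset.univ.filter (fun i : Fin N => π (Sum.inr (Sum.inl i)) = true),
        (u i : ℝ) := by
  have hN' : (N:ℝ) ≠ 0 := Nat.cast_ne_zero.mpr hN.ne'
  rw [← mul_assoc, mul_one_div, div_self hN', one_mul, Finset.sum_filter]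
end

section
/- In the subset-sum MDP construction with target t and any ε ∈ (0, 1/2), there exists a subset X ⊆ U with Σ_{x∈X} x = t if and only if BPD_{(t+ε)/N}(M) − BPD_{(t−ε)/N}(M) > 0. -/
/-!
Multiplying by `N`, a policy's value lies in `((t - ε)/N, (t + ε)/N]` iff the natural number
it collects, a subset sum of `U`, lies in `(t - ε, t + ε]`, i.e. equals `t` since `ε < 1`.
The BPD difference is the proportion of such policies, so it is positive iff one exists, and
the policies' choices at `s₁, …, sₙ` range over all subsets of `U`.
-/

open Set

lemma natCast_mem_Ioc_sub_add_iff {n t : ℕ} {ε : ℝ} (hε0 : 0 < ε) (hε1 : ε < 1) :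
    (n : ℝ) ∈ Ioc (t - ε) (t + ε) ↔ n = t := by
  refine ⟨fun ⟨hlo, hhi⟩ => ?_, fun h => ?_⟩
  · have hn : n < t + 1 := by exact_mod_cast (show (n : ℝ) < t + 1 by linarith)
    have ht : t < n + 1 := by exact_mod_cast (show (t : ℝ) < n + 1 by linarith)
    omega
  · subst h
    constructor <;> linarith

lemma ncard_setOf_le_sub_ncard_setOf_le {α : Type*} [Finite α] (f : α → ℝ) {a b : ℝ}
    (hab : a ≤ b) :
    ({x | f x ≤ b}.ncard : ℝ) - {x | f x ≤ a}.ncard = {x | f x ∈ Ioc a b}.ncard := by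
  have hsub : {x | f x ≤ a} ⊆ {x | f x ≤ b} := fun x hx => le_trans hx hab
  have hdiff : {x | f x ∈ Ioc a b} = {x | f x ≤ b} \ {x | f x ≤ a} := by
    ext x
    simp [and_comm]
  rw [hdiff, ← ncard_sdiff_add_ncard_of_subset hsub, Nat.cast_add, add_sub_cancel_right]

lemma exists_finset_sum_eq_iff_exists_bool {ι M : Type*} [Fintype ι] [AddCommMonoid M]
    (u : ι → M) (t : M) :
    (∃ X : Finset ι, ∑ i ∈ X, u i = t) ↔
      ∃ p : ι → Bool, ∑ i, (if p i then u i else 0) = t := by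
  classical
  refine ⟨fun ⟨X, hX⟩ => ⟨fun i => decide (i ∈ X), ?_⟩,
    fun ⟨p, hp⟩ => ⟨Finset.univ.filter (p ·), ?_⟩⟩
  · simpa [Finset.sum_ite_mem] using hX
  · rwa [Finset.sum_filter]

lemma one_div_mul_le_div_iff {N x b : ℝ} (hN : 0 < N) : 1 / N * x ≤ b / N ↔ x ≤ b := by
  rw [one_div_mul_eq_div, div_le_div_iff_of_pos_right hN]

/-- In the subset-sum MDP construction with target t and ε ∈ (0, 1/2), there is a subset
X ⊆ U with Σ_{x∈X} x = t iff `BPD_{(t+ε)/N}(M) − BPD_{(t−ε)/N}(M) > 0`. -/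
theorem subset_sum_iff_bpd (N : ℕ) (hN : 0 < N) (u : Fin N → ℕ) (t : ℕ)
    (ε : ℝ) (hε0 : 0 < ε) (hε1 : ε < 1 / 2) :
    (∃ X : Finset (Fin N), ∑ i ∈ X, u i = t) ↔
      ({π : (Unit ⊕ Fin N ⊕ Unit) → Bool |
            (1 / (N : ℝ)) *
                (∑ i : Fin N, if π (Sum.inr (Sum.inl i)) then (u i : ℝ) else 0) ≤
              ((t : ℝ) + ε) / N}.ncard : ℝ) / 2 ^ (N + 2) -
          ({π : (Unit ⊕ Fin N ⊕ Unit) → Bool |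
            (1 / (N : ℝ)) *
                (∑ i : Fin N, if π (Sum.inr (Sum.inl i)) then (u i : ℝ) else 0) ≤
              ((t : ℝ) - ε) / N}.ncard : ℝ) / 2 ^ (N + 2) > 0 := by
  have hN' : (0 : ℝ) < N := by exact_mod_cast hN
  simp only [one_div_mul_le_div_iff hN']
  rw [← sub_div, gt_iff_lt, div_pos_iff_of_pos_right (by positivity),
    ncard_setOf_le_sub_ncard_setOf_le _ (by linarith), Nat.cast_pos, ncard_pos,
    exists_finset_sum_eq_iff_exists_bool]
  have hrestrict : Function.Surjective
      fun π : Unit ⊕ Fin N ⊕ Unit → Bool => π ∘ Sum.inr ∘ Sum.inl :=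
    (Sum.inr_injective.comp Sum.inl_injective).surjective_comp_right
  simp only [hrestrict.exists, Set.Nonempty, mem_ofPred_eq, Function.comp_apply]
  congr! with π
  rw [← natCast_mem_Ioc_sub_add_iff hε0 (by linarith)]
  push_cast
  rfl
end

section
/- In the subset-sum MDP construction, BPD_{(t+ε)/N}(M) equals the fraction of subsets X ⊆ U with Σ_{x∈X} x ≤ t + ε; that is, (1/2^{N+2}) Σ_{π} 1{V^π(s₀) ≤ (t+ε)/N} = (1/2^N) |{X ⊆ U : Σ_{x∈X} x ≤ t+ε}|. -/
/-- In the subset-sum MDP construction, `BPD_{(t+ε)/N}(M)` equals the fraction of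
subsets X ⊆ U with element sum at most t + ε. -/
theorem subset_sum_bpd_eq_subset_fraction (N : ℕ) (hN : 0 < N) (u : Fin N → ℕ)
    (t : ℕ) (ε : ℝ) (hε : 0 < ε) :
    ({π : (Unit ⊕ Fin N ⊕ Unit) → Bool |
          (1 / (N : ℝ)) *
              (∑ i : Fin N, if π (Sum.inr (Sum.inl i)) then (u i : ℝ) else 0) ≤
            ((t : ℝ) + ε) / N}.ncard : ℝ) / 2 ^ (N + 2) =
      ({X : Finset (Fin N) | ∑ i ∈ X, (u i : ℝ) ≤ (t : ℝ) + ε}.ncard : ℝ) / 2 ^ N := by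
  have hN' : (0 : ℝ) < N := by exact_mod_cast hN
  set A : Set ((Unit ⊕ Fin N ⊕ Unit) → Bool) :=
    {π | (1 / (N : ℝ)) *
        (∑ i : Fin N, if π (Sum.inr (Sum.inl i)) then (u i : ℝ) else 0) ≤
      ((t : ℝ) + ε) / N} with hA
  set B : Set (Finset (Fin N)) :=
    {X | ∑ i ∈ X, (u i : ℝ) ≤ (t : ℝ) + ε} with hB
  -- key equivalence of conditions
  have hcond : ∀ π : (Unit ⊕ Fin N ⊕ Unit) → Bool,
      π ∈ A ↔ (Finset.univ.filter (fun i => π (Sum.inr (Sum.inl i)) = true)) ∈ B := by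
    intro π
    have hsum : (∑ i : Fin N, if π (Sum.inr (Sum.inl i)) then (u i : ℝ) else 0)
        = ∑ i ∈ Finset.univ.filter (fun i => π (Sum.inr (Sum.inl i)) = true), (u i : ℝ) := by
      rw [Finset.sum_filter]
    constructor
    · intro h
      simp only [hA, Set.mem_setOf_eq] at h
      simp only [hB, Set.mem_setOf_eq, ← hsum]
      have := mul_le_mul_of_nonneg_left h (le_of_lt hN')
      calc (∑ i : Fin N, if π (Sum.inr (Sum.inl i)) then (u i : ℝ) else 0)
          = N * ((1 / (N : ℝ)) * (∑ i : Fin N, if π (Sum.inr (Sum.inl i)) then (u i : ℝ) else 0)) := by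
            field_simp
        _ ≤ N * (((t : ℝ) + ε) / N) := this
        _ = (t : ℝ) + ε := by field_simp
    · intro h
      simp only [hB, Set.mem_setOf_eq, ← hsum] at h
      simp only [hA, Set.mem_setOf_eq]
      rw [one_div, inv_mul_le_iff₀ hN', mul_comm, div_mul_cancel₀ _ (ne_of_gt hN')]
      exact h
  -- the equivalence between A and Bool × Bool × B
  have hcard : A.ncard = 4 * B.ncard := by
    have e : A ≃ Bool × Bool × B := by
      classical
      let g : Bool → Bool → Finset (Fin N) → (Unit ⊕ Fin N ⊕ Unit) → Bool :=
        fun a b X s =>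
          match s with
          | .inl _ => a
          | .inr (.inl i) => decide (i ∈ X)
          | .inr (.inr _) => b
      have hfilter : ∀ a b X,
          (Finset.univ.filter (fun i => g a b X (Sum.inr (Sum.inl i)) = true)) = X := by
        intro a b X; ext i; simp [g]
      refine
        { toFun := fun π => (π.1 (Sum.inl ()), π.1 (Sum.inr (Sum.inr ())),
            ⟨Finset.univ.filter (fun i => π.1 (Sum.inr (Sum.inl i)) = true),
              (hcond π.1).mp π.2⟩)
          invFun := fun p => ⟨g p.1 p.2.1 p.2.2.1, by
            rw [hcond, hfilter p.1 p.2.1 p.2.2.1]; exact p.2.2.2⟩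
          left_inv := ?_
          right_inv := ?_ }
      · rintro ⟨π, hπ⟩
        ext x
        rcases x with _ | x | _
        · simp [g]
        · simp [g]
        · simp [g]
      · rintro ⟨a, b, X, hX⟩
        refine Prod.ext rfl (Prod.ext rfl ?_)
        simp only [Subtype.mk.injEq]
        exact hfilter a b X
    have h1 : A.ncard = Nat.card A := (Nat.card_coe_set_eq A).symm
    have h2 : B.ncard = Nat.card B := (Nat.card_coe_set_eq B).symm
    rw [h1, h2, Nat.card_congr e]
    simp [Nat.card_eq_fintype_card]
    ring
  rw [hcard]
  push_cast
  rw [pow_succ, pow_succ]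
  ring
end

section
/- For a finite MDP with exactly two actions per state, the nested sets of τ-quality controlled policies satisfy N_{i+1}/N_i ≥ 1/2, where N_i = |T_i|. Concretely, the map f sending π to the policy identical to π except taking the opposite action at state s_{i+1} restricts to an injection from T_i \ T_{i+1} into T_{i+1}. -/
/-- For a finite MDP with two actions per state, flipping the action at state s_{i+1}
maps T_i \ T_{i+1} injectively into T_{i+1}; consequently N_{i+1}/N_i ≥ 1/2. -/
theorem tau_quality_ratio_half
    (n : ℕ) (i : ℕ) (hi : i < n)
    (V : (Fin n → Bool) → ℝ)
    (Vi : ℕ → (Fin n → Bool) → ℝ)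
    (hVi : ∀ (j : ℕ) (π : Fin n → Bool),
      IsGreatest (V '' {π' | ∀ s : Fin n, (s : ℕ) < j → π' s = π s}) (Vi j π))
    (τ : ℝ)
    (T : ℕ → Set (Fin n → Bool))
    (hT : ∀ j, T j = {π | τ ≤ Vi j π})
    (hTi : (T i).Nonempty) :
    (∀ π ∈ T i \ T (i + 1),
        Function.update π ⟨i, hi⟩ (!π ⟨i, hi⟩) ∈ T (i + 1)) ∧
      Set.InjOn (fun π => Function.update π ⟨i, hi⟩ (!π ⟨i, hi⟩)) (T i \ T (i + 1)) ∧
      (1 / 2 : ℝ) ≤ ((T (i + 1)).ncard : ℝ) / (T i).ncard := by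
  have hmap : ∀ π ∈ T i \ T (i + 1),
      Function.update π ⟨i, hi⟩ (!π ⟨i, hi⟩) ∈ T (i + 1) := by
    intro π hπ
    obtain ⟨hπi, hπi1⟩ := hπ
    rw [hT] at hπi hπi1 ⊢
    simp only [Set.mem_setOf_eq, not_le] at hπi hπi1 ⊢
    -- witness achieving Vi i π
    obtain ⟨π', hπ'agree, hπ'V⟩ := (hVi i π).1
    -- π' must disagree with π at state i
    have hdis : π' ⟨i, hi⟩ ≠ π ⟨i, hi⟩ := by
      intro heq
      have hmem : π' ∈ {π'' | ∀ s : Fin n, (s : ℕ) < i + 1 → π'' s = π s} := by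
        intro s hs
        rcases Nat.lt_succ_iff_lt_or_eq.mp hs with h | h
        · exact hπ'agree s h
        · have : s = ⟨i, hi⟩ := Fin.ext h
          rw [this]; exact heq
      have := (hVi (i + 1) π).2 ⟨π', hmem, rfl⟩
      have : τ ≤ Vi (i + 1) π := le_trans (hπ'V ▸ hπi) this
      linarith
    -- so π' agrees with the flipped policy on the first i+1 states
    have hmem : π' ∈ {π'' | ∀ s : Fin n, (s : ℕ) < i + 1 →
        π'' s = Function.update π ⟨i, hi⟩ (!π ⟨i, hi⟩) s} := by
      intro s hs
      rcases Nat.lt_succ_iff_lt_or_eq.mp hs with h | h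
      · have hne : s ≠ ⟨i, hi⟩ := by
          intro he; rw [he] at h; exact absurd h (lt_irrefl _)
        rw [Function.update_of_ne hne]
        exact hπ'agree s h
      · have hse : s = ⟨i, hi⟩ := Fin.ext h
        rw [hse, Function.update_self]
        revert hdis
        cases π' ⟨i, hi⟩ <;> cases π ⟨i, hi⟩ <;> simp
    have := (hVi (i + 1) (Function.update π ⟨i, hi⟩ (!π ⟨i, hi⟩))).2 ⟨π', hmem, rfl⟩
    exact le_trans (hπ'V ▸ hπi) this
  have hinj : Set.InjOn (fun π => Function.update π ⟨i, hi⟩ (!π ⟨i, hi⟩))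
      (T i \ T (i + 1)) := by
    intro a _ b _ hab
    funext s
    by_cases hs : s = ⟨i, hi⟩
    · subst hs
      have := congrFun hab ⟨i, hi⟩
      simp only [Function.update_self] at this
      exact Bool.not_inj this
    · have := congrFun hab s
      simpa [Function.update_of_ne hs] using this
  refine ⟨hmap, hinj, ?_⟩
  have hfin1 : (T (i + 1)).Finite := Set.toFinite _
  have hfin0 : (T i).Finite := Set.toFinite _
  have h1 : (T i \ T (i + 1)).ncard ≤ (T (i + 1)).ncard :=
    Set.ncard_le_ncard_of_injOn _ hmap hinj hfin1
  have h2 : (T i ∩ T (i + 1)).ncard ≤ (T (i + 1)).ncard :=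
    Set.ncard_le_ncard (Set.inter_subset_right) hfin1
  have h3 : (T i ∩ T (i + 1)).ncard + (T i \ T (i + 1)).ncard = (T i).ncard :=
    Set.ncard_inter_add_ncard_diff_eq_ncard _ _ hfin0
  have hle : (T i).ncard ≤ 2 * (T (i + 1)).ncard := by omega
  have hpos : 0 < (T i).ncard := hTi.ncard_pos hfin0
  have hposR : (0 : ℝ) < (T i).ncard := by exact_mod_cast hpos
  rw [le_div_iff₀ hposR]
  have : ((T i).ncard : ℝ) ≤ 2 * (T (i + 1)).ncard := by exact_mod_cast hle
  linarith
end
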